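/- For p = 1/2, the total variation distance between Q_{n,1/2} and the uniform distribution on [n] is exactly 1/(n+1). In particular ‖Q_{n,1/2} − U_n‖_TV = Θ(1/n). -/

import Mathlib

open Finset

/-- The Abel-type summand `C(n−1,s)(n−s)^{n−s−2}(s+1)^{s−1}`, with the powers taken in
`ℝ` with integer exponents (so e.g. `1^{-1} = 1`). -/
noncomputable def abelTerm (n s : ℕ) : ℝ :=
  ((n - 1).choose s : ℝ) * ((n : ℝ) - s) ^ ((n : ℤ) - s - 2) * ((s : ℝ) + 1) ^ ((s : ℤ) - 1)

/-- `Q_{n,p}(j)`: the (conditional) probability that the last car prefers spot `j ∈ [n]`,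
given that all cars park, as established in Theorem 3:
`Q_{n,p}(j) = 2/(n+1) − (1/(n+1)^{n−1})[p·Σ_{s=n−j+1}^{n−1} C(n−1,s)(n−s)^{n−s−2}(s+1)^{s−1}`
`+ (1−p)·Σ_{s=0}^{n−j−1} C(n−1,s)(n−s)^{n−s−2}(s+1)^{s−1}]`. -/
noncomputable def Qform (n : ℕ) (p : ℝ) (j : ℕ) : ℝ :=
  2 / ((n : ℝ) + 1) - (1 / ((n : ℝ) + 1) ^ (n - 1)) *
    (p * ∑ s ∈ Finset.Icc (n - j + 1) (n - 1), abelTerm n s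
      + (1 - p) * ∑ s ∈ Finset.range (n - j), abelTerm n s)

/-- Total variation distance between two functions on `[n] = {1,...,n}`. -/
noncomputable def tvDist (n : ℕ) (P Q : ℕ → ℝ) : ℝ :=
  (1 / 2) * ∑ j ∈ Finset.Icc 1 n, |P j - Q j|

/-- The uniform distribution on `[n]`. -/
noncomputable def unifDist (n : ℕ) : ℕ → ℝ := fun _ => 1 / (n : ℝ)

/-!
Splitting off the term `s = n - j`, the two partial sums in `Q_{n,1/2}(j)` add up to the full
sum `Σ_{s<n} a_s` of the Abel summands minus `a_{n-j}`. The full sum is `2(n+1)^{n-2}`: `a_s` is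
symmetric under `s ↦ n-1-s`, the weights `s+1` and `n-s` add to `n+1`, and weighted by `n-s` the
sum is Abel's sum `A_{n-1}(1) = (n+1)^{n-1}`, where
`A_m(y) = Σ_k C(m,k)(k+1)^{k-1}(y+m-k)^{m-k} = (y+m+1)^m` follows by induction from
`A_{m+1}' = (m+1) A_m(· + 1)` and `A_{m+1}(-(m+2)) = 0`, an `(m+1)`-st finite difference of a
polynomial of degree `m`. Hence `Q_{n,1/2}(j) - 1/n = a_{n-j}/(2(n+1)^{n-1}) - 1/(n(n+1))` with
`a_{n-j} ≥ 0`: the triangle inequality gives the upper bound and the term `j = n`, where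
`a_0 = n^{n-2}`, the lower bound.
-/
noncomputable def abelSum (m : ℕ) (y : ℝ) : ℝ :=
  ∑ k ∈ range (m + 1),
    (m.choose k : ℝ) * ((k : ℝ) + 1) ^ (k - 1) * (y + (m - k : ℕ)) ^ (m - k)

lemma hasDerivAt_abelSum_succ (m : ℕ) (y : ℝ) :
    HasDerivAt (abelSum (m + 1)) ((m + 1) * abelSum m (y + 1)) y := by
  have hterm : ∀ k ∈ range (m + 2), HasDerivAt
      (fun y : ℝ => ((m + 1).choose k : ℝ) * ((k : ℝ) + 1) ^ (k - 1) *
        (y + (m + 1 - k : ℕ)) ^ (m + 1 - k))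
      (((m + 1).choose k : ℝ) * ((k : ℝ) + 1) ^ (k - 1) *
        ((m + 1 - k : ℕ) * (y + (m + 1 - k : ℕ)) ^ (m + 1 - k - 1) * 1)) y :=
    fun k _ => (((hasDerivAt_id y).add_const _).pow _).const_mul _
  refine (HasDerivAt.fun_sum hterm).congr_deriv ?_
  rw [sum_range_succ, Nat.sub_self, Nat.cast_zero, zero_mul, zero_mul, mul_zero, add_zero,
    abelSum, mul_sum]
  refine sum_congr rfl fun k hk => ?_
  have hkm : k ≤ m := Nat.lt_succ_iff.mp (mem_range.mp hk)
  have hchoose : ((m + 1).choose k : ℝ) * ((m - k : ℕ) + 1) = (m + 1) * m.choose k := by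
    rw [← Nat.cast_add_one, ← Nat.sub_add_comm hkm]
    exact_mod_cast (Nat.choose_mul_succ_eq m k).symm.trans (mul_comm _ _)
  rw [show m + 1 - k = m - k + 1 by omega, Nat.add_sub_cancel]
  push_cast
  linear_combination ((k : ℝ) + 1) ^ (k - 1) * (y + 1 + (m - k : ℕ)) ^ (m - k) * hchoose

lemma abelSum_succ_neg_add_two (m : ℕ) : abelSum (m + 1) (-(m + 2)) = 0 := by
  have hdiff := congr_fun (fwdDiff_iter_pow_eq_zero_of_lt (R := ℝ) (Nat.lt_succ_self m)) 1
  rw [fwdDiff_iter_eq_sum_shift, Pi.zero_apply] at hdiff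
  rw [abelSum, ← hdiff]
  refine sum_congr rfl fun k hk => ?_
  have hkm : k ≤ m + 1 := Nat.lt_succ_iff.mp (mem_range.mp hk)
  have hbase : -((m : ℝ) + 2) + (m + 1 - k : ℕ) = -((k : ℝ) + 1) := by
    rw [Nat.cast_sub hkm]; push_cast; ring
  have hpow : ((k : ℝ) + 1) ^ (k - 1) * ((k : ℝ) + 1) ^ (m + 1 - k) = ((k : ℝ) + 1) ^ m := by
    rcases k with _ | k
    · simp
    · rw [← pow_add]; congr 1; omega
  rw [hbase, neg_pow, zsmul_eq_mul, nsmul_eq_mul, mul_one, Nat.succ_eq_add_one]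
  push_cast
  linear_combination (-1 : ℝ) ^ (m + 1 - k) * ((m + 1).choose k : ℝ) * hpow

theorem abelSum_eq_pow (m : ℕ) (y : ℝ) : abelSum m y = (y + m + 1) ^ m := by
  induction m generalizing y with
  | zero => simp [abelSum]
  | succ m ih =>
    let g : ℝ → ℝ := fun y => abelSum (m + 1) y - (y + (m + 2)) ^ (m + 1)
    have hg : ∀ x, HasDerivAt g 0 x := fun x => by
      refine ((hasDerivAt_abelSum_succ m x).fun_sub
        (((hasDerivAt_id' x).add_const _).fun_pow (m + 1))).congr_deriv ?_
      rw [ih]; push_cast; ring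
    have hconst : g y = g (-(m + 2)) := is_const_of_deriv_eq_zero
      (fun x => (hg x).differentiableAt) (fun x => (hg x).deriv) y (-(m + 2))
    simp only [g, abelSum_succ_neg_add_two, neg_add_cancel, sub_eq_iff_eq_add] at hconst
    rw [hconst]; push_cast; ring

lemma add_one_mul_pow_pred {R : Type*} [Semiring R] (a : ℕ) :
    ((a : R) + 1) * ((a : R) + 1) ^ (a - 1) = ((a : R) + 1) ^ a := by
  rcases a with _ | a
  · simp
  · rw [Nat.add_sub_cancel, ← pow_succ']

lemma natCast_add_one_zpow_pred {K : Type*} [DivisionRing K] (a : ℕ) :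
    ((a : K) + 1) ^ ((a : ℤ) - 1) = ((a : K) + 1) ^ (a - 1) := by
  rcases a with _ | a
  · simp
  · rw [Nat.add_sub_cancel, Nat.cast_succ, Nat.cast_succ, add_sub_cancel_right, zpow_natCast]

lemma abelTerm_succ {m k : ℕ} (hk : k ≤ m) :
    abelTerm (m + 1) k =
      m.choose k * ((k : ℝ) + 1) ^ (k - 1) * ((m - k : ℕ) + 1) ^ (m - k - 1) := by
  have hbase : ((m + 1 : ℕ) : ℝ) - k = (m - k : ℕ) + 1 := by
    rw [Nat.cast_sub hk]; push_cast; ring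
  have hexp : ((m + 1 : ℕ) : ℤ) - k - 2 = ((m - k : ℕ) : ℤ) - 1 := by omega
  rw [abelTerm, Nat.add_sub_cancel, hbase, hexp, natCast_add_one_zpow_pred,
    natCast_add_one_zpow_pred]
  ring

lemma abelTerm_succ_sub {m k : ℕ} (hk : k ≤ m) :
    abelTerm (m + 1) (m - k) = abelTerm (m + 1) k := by
  rw [abelTerm_succ (Nat.sub_le m k), abelTerm_succ hk, Nat.sub_sub_self hk, Nat.choose_symm hk]
  ring

lemma add_one_mul_sum_abelTerm {n : ℕ} (hn : 1 ≤ n) :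
    ((n : ℝ) + 1) * ∑ s ∈ range n, abelTerm n s = 2 * ((n : ℝ) + 1) ^ (n - 1) := by
  obtain ⟨m, rfl⟩ := Nat.exists_eq_add_of_le' hn
  rw [Nat.add_sub_cancel, Nat.cast_succ, add_assoc, one_add_one_eq_two]
  have hweight : ∀ k ∈ range (m + 1),
      ((m : ℝ) + 2) * abelTerm (m + 1) k
        = ((m - k : ℕ) + 1) * abelTerm (m + 1) k
          + ((m - (m - k) : ℕ) + 1) * abelTerm (m + 1) (m - k) := by
    intro k hk
    have hkm : k ≤ m := Nat.lt_succ_iff.mp (mem_range.mp hk)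
    rw [Nat.sub_sub_self hkm, abelTerm_succ_sub hkm, Nat.cast_sub hkm]
    ring
  have habel :
      ∑ k ∈ range (m + 1), ((m - k : ℕ) + 1) * abelTerm (m + 1) k = ((m : ℝ) + 2) ^ m := by
    rw [show ((m : ℝ) + 2) = 1 + m + 1 by ring, ← abelSum_eq_pow, abelSum]
    refine sum_congr rfl fun k hk => ?_
    rw [abelTerm_succ (Nat.lt_succ_iff.mp (mem_range.mp hk)), add_comm (1 : ℝ),
      ← add_one_mul_pow_pred (m - k)]
    ring
  have hreflect := sum_range_reflect (fun k => ((m - k : ℕ) + 1) * abelTerm (m + 1) k) (m + 1)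
  simp only [Nat.add_sub_cancel] at hreflect
  rw [mul_sum, sum_congr rfl hweight, sum_add_distrib, hreflect, habel]
  ring

lemma abelTerm_nonneg {n s : ℕ} (hs : s < n) : 0 ≤ abelTerm n s := by
  obtain ⟨m, rfl⟩ := Nat.exists_eq_add_of_le' (Nat.one_le_of_lt hs)
  rw [abelTerm_succ (Nat.lt_succ_iff.mp hs)]
  positivity

lemma abelTerm_zero {n : ℕ} (hn : 1 ≤ n) : abelTerm n 0 = (n : ℝ) ^ (n - 2) := by
  obtain ⟨m, rfl⟩ := Nat.exists_eq_add_of_le' hn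
  rw [abelTerm_succ m.zero_le]
  simp

lemma sum_Icc_add_sum_range_add {M : Type*} [AddCommMonoid M] (f : ℕ → M) {k n : ℕ}
    (hk : k < n) :
    ∑ s ∈ Icc (k + 1) (n - 1), f s + ∑ s ∈ range k, f s + f k = ∑ s ∈ range n, f s := by
  rw [← Ico_add_one_right_eq_Icc, Nat.sub_add_cancel (by omega), ← sum_range_add_sum_Ico f hk,
    sum_range_succ]
  abel

lemma sum_Icc_one_sub {M : Type*} [AddCommMonoid M] (f : ℕ → M) (n : ℕ) :
    ∑ j ∈ Icc 1 n, f (n - j) = ∑ s ∈ range n, f s := by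
  rw [← Ico_add_one_right_eq_Icc, sum_Ico_reflect _ _ le_rfl, Nat.sub_self, Nat.add_sub_cancel,
    range_eq_Ico]

lemma Qform_half {n j : ℕ} (hj : j ∈ Icc 1 n) :
    Qform n (1 / 2) j =
      1 / ((n : ℝ) + 1) + abelTerm n (n - j) / (2 * ((n : ℝ) + 1) ^ (n - 1)) := by
  obtain ⟨hj1, hjn⟩ := mem_Icc.mp hj
  have htotal := add_one_mul_sum_abelTerm (hj1.trans hjn)
  rw [← sum_Icc_add_sum_range_add (abelTerm n) (show n - j < n by omega)] at htotal
  rw [Qform]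
  field_simp
  linear_combination -htotal

lemma Qform_half_sub_unifDist {n j : ℕ} (hj : j ∈ Icc 1 n) :
    Qform n (1 / 2) j - unifDist n j =
      abelTerm n (n - j) / (2 * ((n : ℝ) + 1) ^ (n - 1)) - 1 / ((n : ℝ) * ((n : ℝ) + 1)) := by
  have hn0 : (n : ℝ) ≠ 0 := Nat.cast_ne_zero.mpr (by have := mem_Icc.mp hj; omega)
  rw [Qform_half hj, unifDist]
  field_simp
  ring

lemma tvDist_le_of_sub_eq {n : ℕ} {P Q e : ℕ → ℝ} {d : ℝ}
    (hP : ∀ j ∈ Icc 1 n, P j - Q j = e j - d) (he : ∀ j ∈ Icc 1 n, 0 ≤ e j)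
    (hd : 0 ≤ d) :
    tvDist n P Q ≤ (∑ j ∈ Icc 1 n, e j + n * d) / 2 := by
  have hbound : ∀ j ∈ Icc 1 n, |P j - Q j| ≤ e j + d := fun j hj => by
    rw [hP j hj, abs_sub_le_iff]
    constructor <;> linarith [he j hj]
  have := sum_le_sum hbound
  rw [sum_add_distrib, sum_const, Nat.card_Icc, Nat.add_sub_cancel, nsmul_eq_mul] at this
  rw [tvDist]
  linarith

lemma abs_sub_le_two_mul_tvDist {n j : ℕ} (P Q : ℕ → ℝ) (hj : j ∈ Icc 1 n) :
    |P j - Q j| ≤ 2 * tvDist n P Q := by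
  rw [tvDist, ← mul_assoc, show (2 : ℝ) * (1 / 2) = 1 by norm_num, one_mul]
  exact single_le_sum (f := fun j => |P j - Q j|) (fun _ _ => abs_nonneg _) hj

/-- **Theorem 5 (`p = 1/2` is special).** The total variation distance between
`Q_{n,1/2}` and the uniform distribution on `[n]` is at most `1/(n+1)` and at least
`n^{n−2}/(4(n+1)^{n−1}) − 1/(n(n+1))`; in particular it is `Θ(1/n)`. -/
theorem tv_half_bounds (n : ℕ) (hn : 1 ≤ n) :
    tvDist n (Qform n (1 / 2)) (unifDist n) ≤ 1 / ((n : ℝ) + 1) ∧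
      (n : ℝ) ^ (n - 2) / (4 * ((n : ℝ) + 1) ^ (n - 1)) - 1 / ((n : ℝ) * ((n : ℝ) + 1))
        ≤ tvDist n (Qform n (1 / 2)) (unifDist n) := by
  have hsum : ∑ j ∈ Icc 1 n, abelTerm n (n - j) / (2 * ((n : ℝ) + 1) ^ (n - 1))
      = 1 / ((n : ℝ) + 1) := by
    rw [← sum_div, sum_Icc_one_sub (abelTerm n)]
    field_simp
    linear_combination add_one_mul_sum_abelTerm hn
  have hnonneg : ∀ j ∈ Icc 1 n, 0 ≤ abelTerm n (n - j) / (2 * ((n : ℝ) + 1) ^ (n - 1)) :=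
    fun j hj => div_nonneg (abelTerm_nonneg (by have := mem_Icc.mp hj; omega)) (by positivity)
  have hd : 0 ≤ 1 / ((n : ℝ) * ((n : ℝ) + 1)) := by positivity
  constructor
  · calc tvDist n (Qform n (1 / 2)) (unifDist n)
        ≤ (∑ j ∈ Icc 1 n, abelTerm n (n - j) / (2 * ((n : ℝ) + 1) ^ (n - 1))
            + n * (1 / ((n : ℝ) * ((n : ℝ) + 1)))) / 2 :=
          tvDist_le_of_sub_eq (fun _ hj => Qform_half_sub_unifDist hj) hnonneg hd
      _ = 1 / ((n : ℝ) + 1) := by rw [hsum]; field_simp; ring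
  · have hlast := abs_sub_le_two_mul_tvDist (Qform n (1 / 2)) (unifDist n) (right_mem_Icc.mpr hn)
    rw [Qform_half_sub_unifDist (right_mem_Icc.mpr hn), Nat.sub_self, abelTerm_zero hn] at hlast
    have hle := le_abs_self
      ((n : ℝ) ^ (n - 2) / (2 * ((n : ℝ) + 1) ^ (n - 1)) - 1 / ((n : ℝ) * ((n : ℝ) + 1)))
    have hhalf : (n : ℝ) ^ (n - 2) / (4 * ((n : ℝ) + 1) ^ (n - 1))
        = (n : ℝ) ^ (n - 2) / (2 * ((n : ℝ) + 1) ^ (n - 1)) / 2 := by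
      rw [div_div]; ring
    linarith
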